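/- Let G = (V, E) be a finite graph with internal vertices V_int, and fix a subset ℒ ⊆ E. Define the resilience function res_ℒ(p) = Σ_{ℓ=1}^∞ C(ℓ, ⌈ℓ/2⌉) · |{ℛ ∈ Z_∘(G) ∪ Z_ext(G) : |ℛ| = ℓ and |ℛ ∩ ℒ| is odd}| · p^{⌈ℓ/2⌉}, where Z_∘(G) is the set of simple closed loops and Z_ext(G) is the set of simple paths connecting two distinct external vertices through internal vertices. If ℰ ~ 𝒩(p) is a local stochastic random subset of E, and MinMatch(∂ℰ) is any minimum matching of ∂ℰ, then Pr[|( ℰ Δ MinMatch(∂ℰ) ) ∩ ℒ| is odd] ≤ res_ℒ(p). -/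

import Mathlib

/-!
The set `D = ℰ ∆ MinMatch(∂ℰ)` has empty boundary, so it is a disjoint union of elementary
cycles (simple loops and simple paths between external vertices through internal ones); if `D`
meets `ℒ` oddly, one of them, `Z`, does too. Flipping the matching along `Z` keeps its
boundary, so by minimality at least `⌈|Z|/2⌉` edges of `Z` lie in `ℰ`. A union bound over such
`Z` and over the `⌈|Z|/2⌉`-subsets of `Z`, each contained in `ℰ` with probability at most
`p ^ ⌈|Z|/2⌉`, gives `res_ℒ(p)`.
-/

open Finset

variable {V : Type*} [Fintype V] [DecidableEq V]

/-- The boundary of a set of edges: the internal vertices incident to an odd number of edges. -/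
def gBoundary (Vint : Finset V) (ℰ : Finset (Sym2 V)) : Finset V :=
  Vint.filter (fun v => Odd (ℰ.filter (fun e => v ∈ e)).card)

/-- `Z` is the edge set of a simple closed loop of `G`. -/
def IsSimpleClosedLoop (G : SimpleGraph V) (Z : Finset (Sym2 V)) : Prop :=
  ∃ (u : V) (w : G.Walk u u), w.IsCycle ∧ Z = w.edges.toFinset

/-- `Z` is the edge set of a simple path connecting two distinct external vertices
through internal vertices. -/
def IsExtPath (G : SimpleGraph V) (Vint : Finset V) (Z : Finset (Sym2 V)) : Prop :=
  ∃ (u v : V) (w : G.Walk u v), u ≠ v ∧ u ∉ Vint ∧ v ∉ Vint ∧ w.IsPath ∧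
    (∀ x ∈ w.support, x ≠ u → x ≠ v → x ∈ Vint) ∧ Z = w.edges.toFinset

/-- The resilience function of a subset ℒ of edges (Definition 4.1 of the paper):
`res_ℒ(p) = Σ_{ℓ≥1} C(ℓ,⌈ℓ/2⌉) · #{ℛ ∈ Z∘(G) ∪ Z_ext(G) : |ℛ| = ℓ, |ℛ ∩ ℒ| odd} · p^⌈ℓ/2⌉`. -/
noncomputable def res (G : SimpleGraph V) (Vint : Finset V)
    (ℒ : Finset (Sym2 V)) (p : ℝ) : ℝ :=
  ∑' ℓ : ℕ,
    ((ℓ + 1).choose ((ℓ + 2) / 2) : ℝ) *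
      (Set.ncard {ℛ : Finset (Sym2 V) |
          (IsSimpleClosedLoop G ℛ ∨ IsExtPath G Vint ℛ) ∧
          ℛ.card = ℓ + 1 ∧ Odd ((ℛ ∩ ℒ).card)} : ℝ) *
      p ^ ((ℓ + 2) / 2)

open symmDiff

section Finsets

variable {α : Type*} [DecidableEq α]

theorem Finset.card_symmDiff_add_two_mul_card_inter (s t : Finset α) :
    #(s ∆ t) + 2 * #(s ∩ t) = #s + #t := by
  rw [symmDiff_eq_sup_sdiff_inf, sup_eq_union, inf_eq_inter,
    card_sdiff_of_subset inter_subset_union]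
  have := card_union_add_card_inter s t
  have := card_le_card (inter_subset_union (s := s) (t := t))
  omega

theorem Finset.odd_card_symmDiff_iff (s t : Finset α) :
    Odd #(s ∆ t) ↔ ¬(Odd #s ↔ Odd #t) := by
  have := card_symmDiff_add_two_mul_card_inter s t
  rw [Nat.odd_iff, Nat.odd_iff, Nat.odd_iff]
  omega

theorem Finset.filter_symmDiff (p : α → Prop) [DecidablePred p] (s t : Finset α) :
    (s ∆ t).filter p = s.filter p ∆ t.filter p := by
  ext
  simp only [mem_filter, mem_symmDiff]
  tauto

theorem Finset.card_le_two_mul_card_inter_of_subset_symmDiff {y M Z : Finset α}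
    (hZ : Z ⊆ y ∆ M) (hmin : #M ≤ #(M ∆ Z)) : #Z ≤ 2 * #(Z ∩ y) := by
  have hsplit : #(Z ∩ y) + #(Z ∩ M) = #Z := by
    rw [← card_union_of_disjoint, ← inter_union_distrib_left, inter_eq_left.mpr]
    · exact hZ.trans symmDiff_subset_union
    · exact disjoint_left.mpr fun e hy hM => by
        rcases mem_symmDiff.mp (hZ (mem_inter.mp hy).1) with h | h
        exacts [h.2 (mem_inter.mp hM).2, h.2 (mem_inter.mp hy).2]
  have := card_symmDiff_add_two_mul_card_inter M Z
  rw [inter_comm M Z] at this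
  omega

theorem Finset.sum_le_sum_sum_of_forall_exists_mem {ι : Type*} {P : α → ℝ}
    (hP : ∀ y, 0 ≤ P y) {s : Finset α} {t : Finset ι} {A : ι → Finset α}
    (hcover : ∀ y ∈ s, P y ≠ 0 → ∃ i ∈ t, y ∈ A i) :
    ∑ y ∈ s, P y ≤ ∑ i ∈ t, ∑ y ∈ A i, P y := by
  calc ∑ y ∈ s, P y ≤ ∑ y ∈ s, ∑ i ∈ t, if y ∈ A i then P y else 0 := by
        refine sum_le_sum fun y hy => ?_
        have hnonneg : ∀ i ∈ t, 0 ≤ if y ∈ A i then P y else 0 := fun i _ => by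
          split_ifs
          exacts [hP y, le_rfl]
        by_cases h0 : P y = 0
        · exact h0 ▸ sum_nonneg hnonneg
        obtain ⟨i, hi, hyi⟩ := hcover y hy h0
        simpa [hyi] using single_le_sum hnonneg hi
    _ = ∑ i ∈ t, ∑ y ∈ s with y ∈ A i, P y := by
        rw [sum_comm]
        simp only [sum_filter]
    _ ≤ ∑ i ∈ t, ∑ y ∈ A i, P y :=
        sum_le_sum fun i _ => sum_le_sum_of_subset_of_nonneg (fun y hy => (mem_filter.mp hy).2)
          fun y _ _ => hP y

end Finsets

section Graph

variable {V : Type*} [DecidableEq V] {G : SimpleGraph V} {Vint : Finset V}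

theorem gBoundary_symmDiff (Vint : Finset V) (A B : Finset (Sym2 V)) :
    gBoundary Vint (A ∆ B) = gBoundary Vint A ∆ gBoundary Vint B := by
  ext v
  simp only [gBoundary, mem_symmDiff, mem_filter, filter_symmDiff, odd_card_symmDiff_iff]
  tauto

theorem SimpleGraph.Walk.IsTrail.mem_gBoundary_edges_iff {u v : V} {w : G.Walk u v}
    (hw : w.IsTrail) (x : V) :
    x ∈ gBoundary Vint w.edges.toFinset ↔ x ∈ Vint ∧ u ≠ v ∧ (x = u ∨ x = v) := by
  have hcard : #(w.edges.toFinset.filter (x ∈ ·)) = w.edges.countP (x ∈ ·) := by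
    have : w.edges.toFinset.filter (x ∈ ·) = (w.edges.filter (x ∈ ·)).toFinset := by
      ext
      simp
    rw [this, List.toFinset_card_of_nodup (hw.edges_nodup.filter _),
      List.countP_eq_length_filter]
  rw [gBoundary, mem_filter, hcard, ← Nat.not_even_iff_odd, hw.even_countP_edges_iff]
  tauto

/-- `Z_∘(G) ∪ Z_ext(G)`. -/
def IsElementaryCycle (G : SimpleGraph V) (Vint : Finset V) (Z : Finset (Sym2 V)) : Prop :=
  IsSimpleClosedLoop G Z ∨ IsExtPath G Vint Z

namespace IsElementaryCycle

variable {Z : Finset (Sym2 V)}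

theorem gBoundary_eq_empty (hZ : IsElementaryCycle G Vint Z) : gBoundary Vint Z = ∅ := by
  ext x
  rcases hZ with ⟨u, w, hw, rfl⟩ | ⟨u, v, w, -, hu, hv, hw, -, rfl⟩
  · simp [hw.isTrail.mem_gBoundary_edges_iff]
  · rw [hw.isTrail.mem_gBoundary_edges_iff]
    grind

theorem nonempty (hZ : IsElementaryCycle G Vint Z) : Z.Nonempty := by
  rcases hZ with ⟨u, w, hw, rfl⟩ | ⟨u, v, w, huv, -, -, -, -, rfl⟩
  all_goals
    rw [List.toFinset_nonempty_iff, Ne, SimpleGraph.Walk.edges_eq_nil]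
  exacts [hw.not_nil, SimpleGraph.Walk.not_nil_of_ne huv]

theorem subset_edgeSet (hZ : IsElementaryCycle G Vint Z) : ↑Z ⊆ G.edgeSet := by
  rcases hZ with ⟨u, w, -, rfl⟩ | ⟨u, v, w, -, -, -, -, -, rfl⟩
  all_goals
    intro e he
    exact w.edges_subset_edgeSet (List.mem_toFinset.mp he)

end IsElementaryCycle

end Graph

section InternalPaths

open SimpleGraph

variable {V : Type*} {G : SimpleGraph V} {Vint : Finset V} {D : Finset (Sym2 V)}

structure IsInternalPathIn (Vint : Finset V) (D : Finset (Sym2 V)) {u v : V} (w : G.Walk u v) :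
    Prop where
  isPath : w.IsPath
  ne : u ≠ v
  edges_subset : ∀ e ∈ w.edges, e ∈ D
  internal : ∀ x ∈ w.support, x ≠ u → x ≠ v → x ∈ Vint

namespace IsInternalPathIn

variable {u v : V} {w : G.Walk u v}

theorem reverse (hw : IsInternalPathIn Vint D w) : IsInternalPathIn Vint D w.reverse where
  isPath := hw.isPath.reverse
  ne := hw.ne.symm
  edges_subset e he := hw.edges_subset e (by simpa using he)
  internal x hx hxv hxu := hw.internal x (by simpa using hx) hxu hxv

variable [DecidableEq V]

theorem length_le (hw : IsInternalPathIn Vint D w) : w.length ≤ #D := by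
  rw [← w.length_edges, ← List.toFinset_card_of_nodup hw.isPath.isTrail.edges_nodup]
  exact card_le_card fun e he => hw.edges_subset e (List.mem_toFinset.mp he)

/-- An internal endpoint of a path in a cycle `D` has odd degree in the path but even degree
in `D`, so `D` has an edge there that the path does not use. -/
theorem exists_edge_notMem_edges (hD : ↑D ⊆ G.edgeSet) (hb : gBoundary Vint D = ∅)
    (hw : IsInternalPathIn Vint D w) (hv : v ∈ Vint) :
    ∃ x, G.Adj v x ∧ s(v, x) ∈ D ∧ s(v, x) ∉ w.edges := by
  by_contra! hall
  have hfilter : D.filter (v ∈ ·) = w.edges.toFinset.filter (v ∈ ·) := by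
    refine Subset.antisymm (fun e he => ?_) (filter_subset_filter _ fun e he =>
      hw.edges_subset e (List.mem_toFinset.mp he))
    obtain ⟨heD, hve⟩ := mem_filter.mp he
    obtain ⟨x, rfl⟩ := Sym2.mem_iff_exists.mp hve
    exact mem_filter.mpr ⟨List.mem_toFinset.mpr (hall x (hD heD) heD), hve⟩
  have hvw : v ∈ gBoundary Vint w.edges.toFinset :=
    (hw.isPath.isTrail.mem_gBoundary_edges_iff v).mpr ⟨hv, hw.ne, Or.inr rfl⟩
  rw [gBoundary, mem_filter, ← hfilter] at hvw
  have hvD : v ∈ gBoundary Vint D := mem_filter.mpr hvw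
  simp [hb] at hvD

theorem exists_loop_or_extend (hD : ↑D ⊆ G.edgeSet) (hb : gBoundary Vint D = ∅)
    (hw : IsInternalPathIn Vint D w) (hv : v ∈ Vint) :
    (∃ Z ⊆ D, IsSimpleClosedLoop G Z) ∨
      ∃ (a b : V) (w' : G.Walk a b), IsInternalPathIn Vint D w' ∧ w'.length = w.length + 1 := by
  obtain ⟨x, hadj, hxD, hxw⟩ := hw.exists_edge_notMem_edges hD hb hv
  -- the new edge `s(v, x)` either closes the loop `v → x ⇝ v` or extends `w` at `v`
  by_cases hx : x ∈ w.support
  · refine .inl ⟨(Walk.cons hadj (w.dropUntil x hx)).edges.toFinset, fun e he => ?_,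
      v, _, (Walk.cons_isCycle_iff _ _).mpr ⟨hw.isPath.dropUntil hx,
        fun h => hxw (w.edges_dropUntil_subset_edges hx h)⟩, rfl⟩
    rcases List.mem_cons.mp (List.mem_toFinset.mp he) with rfl | he
    exacts [hxD, hw.edges_subset e (w.edges_dropUntil_subset_edges hx he)]
  · refine .inr ⟨x, u, Walk.cons hadj.symm w.reverse, ⟨?_, ?_, fun e he => ?_, ?_⟩, by simp⟩
    · exact (Walk.cons_isPath_iff _ _).mpr ⟨hw.isPath.reverse, by simpa using hx⟩
    · exact fun h => hx (h ▸ w.start_mem_support)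
    · rcases List.mem_cons.mp (by simpa using he) with rfl | he
      exacts [Sym2.eq_swap ▸ hxD, hw.edges_subset e he]
    · intro y hy hyx hyu
      rcases List.mem_cons.mp (by simpa using hy) with rfl | hy
      · exact absurd rfl hyx
      by_cases hyv : y = v
      · exact hyv ▸ hv
      · exact hw.internal y hy hyu hyv

/-- Extend the path at an internal endpoint until it either closes a loop or ends on two
external vertices; the length is bounded by `#D`, so this terminates. -/
theorem exists_elementaryCycle_subset {u v : V} {w : G.Walk u v} (hD : ↑D ⊆ G.edgeSet)
    (hb : gBoundary Vint D = ∅) (hw : IsInternalPathIn Vint D w) :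
    ∃ Z ⊆ D, IsElementaryCycle G Vint Z := by
  by_cases hint : u ∈ Vint ∨ v ∈ Vint
  · have hstep : (∃ Z ⊆ D, IsSimpleClosedLoop G Z) ∨ ∃ (a b : V) (w' : G.Walk a b),
        IsInternalPathIn Vint D w' ∧ w'.length = w.length + 1 := by
      rcases hint with hu | hv
      · simpa using hw.reverse.exists_loop_or_extend hD hb hu
      · exact hw.exists_loop_or_extend hD hb hv
    rcases hstep with ⟨Z, hZD, hZ⟩ | ⟨a, b, w', hw', hlen⟩
    · exact ⟨Z, hZD, .inl hZ⟩
    · have := hw'.length_le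
      exact hw'.exists_elementaryCycle_subset hD hb
  · push Not at hint
    exact ⟨_, fun e he => hw.edges_subset e (List.mem_toFinset.mp he),
      .inr ⟨u, v, w, hw.ne, hint.1, hint.2, hw.isPath, hw.internal, rfl⟩⟩
termination_by #D - w.length

end IsInternalPathIn

end InternalPaths

section CycleDecomposition

open SimpleGraph

variable {V : Type*} [DecidableEq V] {G : SimpleGraph V} {Vint : Finset V}
  {D : Finset (Sym2 V)}

theorem exists_elementaryCycle_subset (hD : ↑D ⊆ G.edgeSet) (hb : gBoundary Vint D = ∅)
    (hne : D.Nonempty) : ∃ Z ⊆ D, IsElementaryCycle G Vint Z := by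
  obtain ⟨⟨a, b⟩, he⟩ := hne
  have hab : G.Adj a b := hD he
  refine IsInternalPathIn.exists_elementaryCycle_subset (w := hab.toWalk) hD hb
    ⟨hab.isPath_toWalk, hab.ne, fun e he' => ?_, fun x hx hxa hxb => ?_⟩
  · simp only [Adj.toWalk, Walk.edges_cons, Walk.edges_nil, List.mem_singleton] at he'
    exact he' ▸ he
  · simp only [Adj.toWalk, Walk.support_cons, Walk.support_nil, List.mem_cons] at hx
    tauto

/-- Peel elementary cycles off `D` until one of them meets `ℒ` an odd number of times. -/
theorem exists_elementaryCycle_subset_odd_card_inter (ℒ : Finset (Sym2 V))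
    (hD : ↑D ⊆ G.edgeSet) (hb : gBoundary Vint D = ∅) (hodd : Odd #(D ∩ ℒ)) :
    ∃ Z ⊆ D, IsElementaryCycle G Vint Z ∧ Odd #(Z ∩ ℒ) := by
  induction D using Finset.strongInduction with
  | H D ih =>
  have hne : D.Nonempty := nonempty_of_ne_empty fun h => by simp [h] at hodd
  obtain ⟨Z, hZD, hZ⟩ := exists_elementaryCycle_subset hD hb hne
  by_cases hZodd : Odd #(Z ∩ ℒ)
  · exact ⟨Z, hZD, hZ, hZodd⟩
  have hb' : gBoundary Vint (D \ Z) = ∅ := by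
    rw [← symmDiff_of_ge hZD, gBoundary_symmDiff, hb, hZ.gBoundary_eq_empty, symmDiff_self,
      bot_eq_empty]
  have hodd' : Odd #((D \ Z) ∩ ℒ) := by
    have hsplit : (D \ Z) ∩ ℒ = (D ∩ ℒ) \ (Z ∩ ℒ) := by
      ext
      simp only [mem_inter, mem_sdiff]
      tauto
    have hsub : Z ∩ ℒ ⊆ D ∩ ℒ := inter_subset_inter_right hZD
    rw [hsplit, card_sdiff_of_subset hsub]
    exact Nat.Odd.sub_even (card_le_card hsub) hodd (Nat.not_odd_iff_even.mp hZodd)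
  obtain ⟨Z', hZ'D, hZ'⟩ := ih (D \ Z) (sdiff_ssubset hZD hZ.nonempty)
    (subset_trans (coe_subset.mpr sdiff_subset) hD) hb' hodd'
  exact ⟨Z', hZ'D.trans sdiff_subset, hZ'⟩

end CycleDecomposition

section Minimality

variable {V : Type*} [DecidableEq V] {G : SimpleGraph V} {Vint : Finset V}

/-- Flipping `M` along an elementary cycle keeps its boundary, so by minimality at least half
of the cycle lies in `y`. -/
theorem exists_elementaryCycle_card_le_two_mul_card_inter (ℒ : Finset (Sym2 V))
    {y M : Finset (Sym2 V)} (hy : ↑y ⊆ G.edgeSet) (hM : ↑M ⊆ G.edgeSet)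
    (hbd : gBoundary Vint M = gBoundary Vint y)
    (hmin : ∀ m : Finset (Sym2 V), ↑m ⊆ G.edgeSet → gBoundary Vint m = gBoundary Vint y →
      #M ≤ #m)
    (hodd : Odd #((y ∆ M) ∩ ℒ)) :
    ∃ Z, IsElementaryCycle G Vint Z ∧ Odd #(Z ∩ ℒ) ∧ #Z ≤ 2 * #(Z ∩ y) := by
  have hsymm {A B : Finset (Sym2 V)} (hA : ↑A ⊆ G.edgeSet) (hB : ↑B ⊆ G.edgeSet) :
      ↑(A ∆ B) ⊆ G.edgeSet := fun e he =>
    (mem_symmDiff.mp he).elim (fun h => hA h.1) (fun h => hB h.1)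
  obtain ⟨Z, hZD, hZ, hZodd⟩ := exists_elementaryCycle_subset_odd_card_inter ℒ (hsymm hy hM)
    (by rw [gBoundary_symmDiff, hbd, symmDiff_self, bot_eq_empty]) hodd
  refine ⟨Z, hZ, hZodd, card_le_two_mul_card_inter_of_subset_symmDiff hZD
    (hmin _ (hsymm hM hZ.subset_edgeSet) ?_)⟩
  rw [gBoundary_symmDiff, hZ.gBoundary_eq_empty, ← bot_eq_empty, symmDiff_bot, hbd]

end Minimality

theorem Finset.sum_card_eq_tsum_card_filter_smul {α M : Type*} [AddCommMonoid M]
    [TopologicalSpace M] (𝒵 : Finset (Finset α)) (h𝒵 : ∀ Z ∈ 𝒵, Z.Nonempty) (f : ℕ → M) :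
    ∑ Z ∈ 𝒵, f #Z = ∑' ℓ : ℕ, #{Z ∈ 𝒵 | #Z = ℓ + 1} • f (ℓ + 1) := by
  have hfiber (ℓ : ℕ) : {Z ∈ 𝒵 | #Z - 1 = ℓ} = {Z ∈ 𝒵 | #Z = ℓ + 1} :=
    filter_congr fun Z hZ => by have := (h𝒵 Z hZ).card_pos; omega
  rw [tsum_eq_sum (s := 𝒵.image (#· - 1)), ← sum_fiberwise_of_maps_to (g := (#· - 1))
    fun Z hZ => mem_image_of_mem _ hZ]
  · refine sum_congr rfl fun ℓ _ => ?_
    rw [hfiber, ← sum_const]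
    exact sum_congr rfl fun Z hZ => by rw [(mem_filter.mp hZ).2]
  · intro ℓ hℓ
    rw [← hfiber, filter_eq_empty_iff.mpr fun Z hZ (hZℓ : #Z - 1 = ℓ) =>
      hℓ (hZℓ ▸ mem_image_of_mem _ hZ), card_empty, zero_smul]

open Classical in
noncomputable def oddElementaryCycles (G : SimpleGraph V) (Vint : Finset V)
    (ℒ : Finset (Sym2 V)) : Finset (Finset (Sym2 V)) :=
  {Z | IsElementaryCycle G Vint Z ∧ Odd #(Z ∩ ℒ)}

theorem mem_oddElementaryCycles {G : SimpleGraph V} {Vint : Finset V} {ℒ Z : Finset (Sym2 V)} :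
    Z ∈ oddElementaryCycles G Vint ℒ ↔ IsElementaryCycle G Vint Z ∧ Odd #(Z ∩ ℒ) := by
  simp [oddElementaryCycles]

theorem res_eq_sum (G : SimpleGraph V) (Vint : Finset V) (ℒ : Finset (Sym2 V)) (p : ℝ) :
    res G Vint ℒ p = ∑ Z ∈ oddElementaryCycles G Vint ℒ,
      ((#Z).choose ((#Z + 1) / 2) : ℝ) * p ^ ((#Z + 1) / 2) := by
  rw [sum_card_eq_tsum_card_filter_smul _
    (fun Z hZ => (mem_oddElementaryCycles.mp hZ).1.nonempty)
    fun n => (n.choose ((n + 1) / 2) : ℝ) * p ^ ((n + 1) / 2), res]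
  refine tsum_congr fun ℓ => ?_
  have hset : {ℛ : Finset (Sym2 V) | (IsSimpleClosedLoop G ℛ ∨ IsExtPath G Vint ℛ) ∧
      #ℛ = ℓ + 1 ∧ Odd #(ℛ ∩ ℒ)} = ↑{Z ∈ oddElementaryCycles G Vint ℒ | #Z = ℓ + 1} := by
    ext
    simp only [Set.mem_ofPred_eq, coe_filter, mem_oddElementaryCycles, IsElementaryCycle]
    tauto
  rw [hset, Set.ncard_coe_finset, nsmul_eq_mul]
  ring

theorem stmt4_general (G : SimpleGraph V) [DecidableRel G.Adj] (Vint : Finset V)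
    (ℒ : Finset (Sym2 V))
    (p : ℝ)
    (P : Finset (Sym2 V) → ℝ) (hP : ∀ y, 0 ≤ P y)
    (hPsupp : ∀ y, P y ≠ 0 → y ⊆ G.edgeFinset)
    (hls : ∀ F : Finset (Sym2 V),
      (∑ y ∈ Finset.univ.filter (fun y : Finset (Sym2 V) => F ⊆ y), P y) ≤ p ^ F.card)
    (MM : Finset V → Finset (Sym2 V))
    (hMMsub : ∀ s, MM s ⊆ G.edgeFinset)
    (hMMmatch : ∀ y : Finset (Sym2 V), y ⊆ G.edgeFinset →
      gBoundary Vint (MM (gBoundary Vint y)) = gBoundary Vint y)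
    (hMMmin : ∀ y : Finset (Sym2 V), y ⊆ G.edgeFinset →
      ∀ m : Finset (Sym2 V), m ⊆ G.edgeFinset →
        gBoundary Vint m = gBoundary Vint y →
        (MM (gBoundary Vint y)).card ≤ m.card) :
    (∑ y ∈ Finset.univ.filter
        (fun y : Finset (Sym2 V) =>
          Odd (((symmDiff y (MM (gBoundary Vint y))) ∩ ℒ).card)), P y)
      ≤ res G Vint ℒ p := by
  have hedge (m : Finset (Sym2 V)) : m ⊆ G.edgeFinset ↔ ↑m ⊆ G.edgeSet := by
    rw [← coe_subset, SimpleGraph.coe_edgeFinset]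
  set 𝒞 := (oddElementaryCycles G Vint ℒ).sigma fun Z => powersetCard ((#Z + 1) / 2) Z
  have hcover : ∀ y ∈ univ.filter
      (fun y : Finset (Sym2 V) => Odd #((y ∆ MM (gBoundary Vint y)) ∩ ℒ)),
      P y ≠ 0 → ∃ i ∈ 𝒞, y ∈ univ.filter (i.2 ⊆ ·) := by
    intro y hy hPy
    have hyE := hPsupp y hPy
    obtain ⟨Z, hZ, hZodd, hZy⟩ := exists_elementaryCycle_card_le_two_mul_card_inter ℒ
      ((hedge y).mp hyE) ((hedge _).mp (hMMsub _)) (hMMmatch y hyE)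
      (fun m hm => hMMmin y hyE m ((hedge m).mpr hm)) (mem_filter.mp hy).2
    obtain ⟨F, hFZy, hF⟩ := exists_subset_card_eq (show (#Z + 1) / 2 ≤ #(Z ∩ y) by omega)
    exact ⟨⟨Z, F⟩, mem_sigma.mpr ⟨mem_oddElementaryCycles.mpr ⟨hZ, hZodd⟩,
      mem_powersetCard.mpr ⟨hFZy.trans inter_subset_left, hF⟩⟩,
      mem_filter.mpr ⟨mem_univ _, hFZy.trans inter_subset_right⟩⟩
  calc _ ≤ ∑ i ∈ 𝒞, ∑ y ∈ univ.filter (i.2 ⊆ ·), P y :=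
        sum_le_sum_sum_of_forall_exists_mem hP hcover
    _ ≤ ∑ i ∈ 𝒞, p ^ ((#i.1 + 1) / 2) := sum_le_sum fun i hi =>
        (mem_powersetCard.mp (mem_sigma.mp hi).2).2 ▸ hls i.2
    _ = ∑ Z ∈ oddElementaryCycles G Vint ℒ,
          ((#Z).choose ((#Z + 1) / 2) : ℝ) * p ^ ((#Z + 1) / 2) := by
        rw [sum_sigma]
        simp [card_powersetCard]
    _ = res G Vint ℒ p := (res_eq_sum G Vint ℒ p).symm

/-- Proposition 4.2: for a local stochastic random subset ℰ of the edges
(with pmf `P`) and any choice `MM` of minimum matchings, the probability that the parity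
of `(ℰ Δ MinMatch(∂ℰ)) ∩ ℒ` is odd is at most `res_ℒ(p)`. -/
theorem stmt4 (G : SimpleGraph V) [DecidableRel G.Adj] (Vint : Finset V)
    (ℒ : Finset (Sym2 V)) (hℒ : ℒ ⊆ G.edgeFinset)
    (p : ℝ) (hp0 : 0 ≤ p) (hp1 : p ≤ 1)
    (P : Finset (Sym2 V) → ℝ) (hP : ∀ y, 0 ≤ P y)
    (hPsum : ∑ y : Finset (Sym2 V), P y = 1)
    (hPsupp : ∀ y, P y ≠ 0 → y ⊆ G.edgeFinset)
    (hls : ∀ F : Finset (Sym2 V),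
      (∑ y ∈ Finset.univ.filter (fun y : Finset (Sym2 V) => F ⊆ y), P y) ≤ p ^ F.card)
    (MM : Finset V → Finset (Sym2 V))
    (hMMsub : ∀ s, MM s ⊆ G.edgeFinset)
    (hMMmatch : ∀ y : Finset (Sym2 V), y ⊆ G.edgeFinset →
      gBoundary Vint (MM (gBoundary Vint y)) = gBoundary Vint y)
    (hMMmin : ∀ y : Finset (Sym2 V), y ⊆ G.edgeFinset →
      ∀ m : Finset (Sym2 V), m ⊆ G.edgeFinset →
        gBoundary Vint m = gBoundary Vint y →
        (MM (gBoundary Vint y)).card ≤ m.card) :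
    (∑ y ∈ Finset.univ.filter
        (fun y : Finset (Sym2 V) =>
          Odd (((symmDiff y (MM (gBoundary Vint y))) ∩ ℒ).card)), P y)
      ≤ res G Vint ℒ p :=
  stmt4_general G Vint ℒ p P hP hPsupp hls MM hMMsub hMMmatch hMMmin
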